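/- arXiv:math/9905043 — 2 statements merged into one kernel-verified Lean document; each statement's English description precedes it below -/
import Mathlib

section
/- Let r(x) = |x| and s(x) = dist(x, ℂ^{m-n}) for a complex subspace ℂ^{m-n} ⊂ ℂ^m (n > 0), and let β, γ ∈ ℝ. Then on ℂ^m \ ℂ^{m-n}, the (Riemannian, divided by 2) Laplacian satisfies Δ(r^β s^γ) = -½ r^{β-2} s^{γ-2} [ γ(γ+2n-2) r² + β(2m-2+β+2γ) s² ]. -/
open scoped RealInnerProductSpace

/-- The Laplacian in the Kähler convention: half the (geometer's sign) Riemannian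
Laplacian on Euclidean space, i.e. `Δ f = -(1/2) ∑ᵢ ∂²f/∂xᵢ²`. -/
noncomputable def kahlerLaplacian {k : ℕ} (f : EuclideanSpace ℝ (Fin k) → ℝ)
    (x : EuclideanSpace ℝ (Fin k)) : ℝ :=
  -(1/2) * ∑ i : Fin k,
    fderiv ℝ (fun y => fderiv ℝ f y (EuclideanSpace.single i 1)) x
      (EuclideanSpace.single i 1)

/-! Writing `u = r² = ∑ᵢ yᵢ²` and `v = s² = ∑_{i ∈ T} yᵢ²` (with `T` the coordinates that vanish on
the subspace), the function is `u ^ (β/2) * v ^ (γ/2)`, and each partial derivative lowers one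
exponent while producing a coordinate factor:
`∂ᵢ (u^p v^q) = yᵢ (2p u^(p-1) v^q + [i ∈ T] 2q u^p v^(q-1))`.
Differentiating once more and summing over `i`, the sums `∑ yᵢ² = u`, `∑_{i ∈ T} yᵢ² = v`,
`∑ 1 = 2m` and `∑_{i ∈ T} 1 = 2n` collapse the result to the two terms of the formula. -/

open Finset

namespace EuclideanSpace

variable {ι : Type*}

noncomputable def sqSum (A : Finset ι) (y : EuclideanSpace ℝ ι) : ℝ := ∑ j ∈ A, y j ^ 2

theorem sqSum_nonneg (A : Finset ι) (y : EuclideanSpace ℝ ι) : 0 ≤ sqSum A y :=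
  sum_nonneg fun _ _ => sq_nonneg _

theorem sqSum_pos_iff (A : Finset ι) (y : EuclideanSpace ℝ ι) :
    0 < sqSum A y ↔ ∃ i ∈ A, y i ≠ 0 := by
  simp [sqSum, sum_pos_iff_of_nonneg fun i _ => sq_nonneg (y i), sq_pos_iff]

theorem sqSum_le_sqSum_univ [Fintype ι] (A : Finset ι) (y : EuclideanSpace ℝ ι) :
    sqSum A y ≤ sqSum univ y :=
  sum_le_sum_of_subset_of_nonneg (subset_univ A) fun _ _ _ => sq_nonneg _

theorem norm_eq_sqrt_sqSum_univ [Fintype ι] (y : EuclideanSpace ℝ ι) :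
    ‖y‖ = √(sqSum univ y) := by
  simp [EuclideanSpace.norm_eq, sqSum]

theorem infDist_eq_sqrt_sqSum [Fintype ι] (P : ι → Prop) [DecidablePred P]
    (y : EuclideanSpace ℝ ι) :
    Metric.infDist y {x : EuclideanSpace ℝ ι | ∀ i, P i → x i = 0} = √(sqSum {i | P i} y) := by
  have dist_eq (z : EuclideanSpace ℝ ι) : dist y z = √(∑ i, (y i - z i) ^ 2) := by
    simp only [EuclideanSpace.dist_eq, Real.dist_eq, sq_abs]
  let p : EuclideanSpace ℝ ι := WithLp.toLp 2 fun i => if P i then 0 else y i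
  have hp : p ∈ {x : EuclideanSpace ℝ ι | ∀ i, P i → x i = 0} := fun i hi => by simp [p, hi]
  refine le_antisymm ((Metric.infDist_le_dist_of_mem hp).trans_eq ?_) ?_
  · rw [dist_eq, ← sum_filter_add_sum_filter_not _ P]
    congr 1
    rw [sum_eq_zero (s := {i | ¬P i}) fun i hi => by simp_all [p], add_zero]
    exact sum_congr rfl fun i hi => by simp_all [p]
  · refine (Metric.le_infDist ⟨p, hp⟩).2 fun z hz => ?_
    rw [dist_eq]
    refine Real.sqrt_le_sqrt ?_
    calc ∑ i with P i, y i ^ 2 = ∑ i with P i, (y i - z i) ^ 2 :=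
          sum_congr rfl fun i hi => by rw [hz i (mem_filter.1 hi).2, sub_zero]
      _ ≤ ∑ i, (y i - z i) ^ 2 :=
          sum_le_sum_of_subset_of_nonneg (filter_subset _ _) fun i _ _ => sq_nonneg _

theorem hasFDerivAt_sqSum [Fintype ι] (A : Finset ι) (y : EuclideanSpace ℝ ι) :
    HasFDerivAt (sqSum A) (∑ j ∈ A, (2 * y j) • proj (𝕜 := ℝ) j) y :=
  HasFDerivAt.fun_sum fun j _ => by simpa using ((proj (𝕜 := ℝ) j).hasFDerivAt (x := y)).pow 2

theorem isOpen_setOf_sqSum_pos [Fintype ι] (A : Finset ι) :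
    IsOpen {y : EuclideanSpace ℝ ι | 0 < sqSum A y} := by
  have hdiff : Differentiable ℝ (sqSum A) := fun y => (hasFDerivAt_sqSum A y).differentiableAt
  exact isOpen_lt continuous_const hdiff.continuous

theorem fderiv_coord_mul_single [Fintype ι] [DecidableEq ι] {H : EuclideanSpace ℝ ι → ℝ}
    {x : EuclideanSpace ℝ ι} (hH : DifferentiableAt ℝ H x) (i : ι) :
    fderiv ℝ (fun y => y i * H y) x (single i 1) = H x + x i * fderiv ℝ H x (single i 1) := by
  have hi : HasFDerivAt (fun y : EuclideanSpace ℝ ι => y i) (proj (𝕜 := ℝ) i) x :=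
    (proj (𝕜 := ℝ) i).hasFDerivAt
  rw [(hi.fun_mul hH.hasFDerivAt).fderiv]
  simp [add_comm]

theorem sum_smul_proj_apply_single [Fintype ι] [DecidableEq ι] (A : Finset ι) (c : ι → ℝ)
    (i : ι) : (∑ j ∈ A, c j • proj (𝕜 := ℝ) j) (single i 1) = if i ∈ A then c i else 0 := by
  simp

section SqSumPow

variable [Fintype ι] (T : Finset ι)

noncomputable def sqSumPow (p q : ℝ) (y : EuclideanSpace ℝ ι) : ℝ :=
  sqSum univ y ^ p * sqSum T y ^ q

theorem sqSumPow_div_two (a b : ℝ) (y : EuclideanSpace ℝ ι) :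
    sqSumPow T (a / 2) (b / 2) y = √(sqSum univ y) ^ a * √(sqSum T y) ^ b := by
  rw [sqSumPow, Real.rpow_div_two_eq_sqrt a (sqSum_nonneg _ _),
    Real.rpow_div_two_eq_sqrt b (sqSum_nonneg _ _)]

variable {T} {p q : ℝ} {y : EuclideanSpace ℝ ι}

theorem sqSum_univ_mul_sqSumPow (hy : 0 < sqSum T y) :
    sqSum univ y * sqSumPow T (p - 1) q y = sqSumPow T p q y := by
  have hU := (hy.trans_le (sqSum_le_sqSum_univ T y)).ne'
  rw [sqSumPow, sqSumPow, Real.rpow_sub_one hU]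
  field_simp

theorem sqSum_mul_sqSumPow (hy : 0 < sqSum T y) :
    sqSum T y * sqSumPow T p (q - 1) y = sqSumPow T p q y := by
  rw [sqSumPow, sqSumPow, Real.rpow_sub_one hy.ne']
  field_simp

theorem hasFDerivAt_sqSumPow (hy : 0 < sqSum T y) :
    HasFDerivAt (sqSumPow T p q)
      (sqSum univ y ^ p • (q * sqSum T y ^ (q - 1)) • ∑ j ∈ T, (2 * y j) • proj (𝕜 := ℝ) j
        + sqSum T y ^ q • (p * sqSum univ y ^ (p - 1)) • ∑ j, (2 * y j) • proj (𝕜 := ℝ) j) y :=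
  ((hasFDerivAt_sqSum univ y).rpow_const
      (Or.inl (hy.trans_le (sqSum_le_sqSum_univ T y)).ne')).mul
    ((hasFDerivAt_sqSum T y).rpow_const (Or.inl hy.ne'))

variable [DecidableEq ι]

theorem fderiv_sqSumPow_single (hy : 0 < sqSum T y) (i : ι) :
    fderiv ℝ (sqSumPow T p q) y (single i 1)
      = y i * (2 * p * sqSumPow T (p - 1) q y
          + (if i ∈ T then 2 * q else 0) * sqSumPow T p (q - 1) y) := by
  rw [(hasFDerivAt_sqSumPow hy).fderiv]
  simp only [add_apply, smul_apply, sum_smul_proj_apply_single, smul_eq_mul, mem_univ, if_true,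
    sqSumPow]
  split_ifs <;> ring

theorem fderiv_fderiv_sqSumPow_single (hy : 0 < sqSum T y) (i : ι) :
    fderiv ℝ (fun z => fderiv ℝ (sqSumPow T p q) z (single i 1)) y (single i 1)
      = 2 * p * sqSumPow T (p - 1) q y + (if i ∈ T then 2 * q else 0) * sqSumPow T p (q - 1) y
        + y i * (y i * (2 * p * (2 * (p - 1) * sqSumPow T (p - 1 - 1) q y
            + (if i ∈ T then 2 * q else 0) * sqSumPow T (p - 1) (q - 1) y))
          + (if i ∈ T then 2 * q else 0) * (y i * (2 * p * sqSumPow T (p - 1) (q - 1) y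
            + (if i ∈ T then 2 * (q - 1) else 0) * sqSumPow T p (q - 1 - 1) y))) := by
  have hdiff : ∀ p q : ℝ, DifferentiableAt ℝ (sqSumPow T p q) y :=
    fun p q => (hasFDerivAt_sqSumPow hy).differentiableAt
  have hfirst : (fun z => fderiv ℝ (sqSumPow T p q) z (single i 1)) =ᶠ[nhds y]
      fun z => z i * (2 * p * sqSumPow T (p - 1) q z
        + (if i ∈ T then 2 * q else 0) * sqSumPow T p (q - 1) z) :=
    Filter.eventuallyEq_of_mem ((isOpen_setOf_sqSum_pos T).mem_nhds hy)
      fun z hz => fderiv_sqSumPow_single hz i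
  rw [hfirst.fderiv_eq, fderiv_coord_mul_single (by fun_prop), fderiv_fun_add (by fun_prop)
    (by fun_prop), fderiv_const_mul (hdiff _ _), fderiv_const_mul (hdiff _ _)]
  simp only [add_apply, smul_apply, smul_eq_mul, fderiv_sqSumPow_single hy]
  ring

theorem sum_fderiv_fderiv_sqSumPow_single (hy : 0 < sqSum T y) :
    ∑ i, fderiv ℝ (fun z => fderiv ℝ (sqSumPow T p q) z (single i 1)) y (single i 1)
      = 2 * p * (Fintype.card ι + 2 * p - 2 + 4 * q) * sqSumPow T (p - 1) q y
        + 2 * q * (#T + 2 * q - 2) * sqSumPow T p (q - 1) y := by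
  have hterm : ∀ i, fderiv ℝ (fun z => fderiv ℝ (sqSumPow T p q) z (single i 1)) y (single i 1)
      = 2 * p * sqSumPow T (p - 1) q y
        + (if i ∈ T then 1 else 0) * (2 * q * sqSumPow T p (q - 1) y)
        + y i ^ 2 * (4 * p * (p - 1) * sqSumPow T (p - 1 - 1) q y)
        + (if i ∈ T then 1 else 0) * y i ^ 2 * (8 * p * q * sqSumPow T (p - 1) (q - 1) y
          + 4 * q * (q - 1) * sqSumPow T p (q - 1 - 1) y) := fun i => by
    rw [fderiv_fderiv_sqSumPow_single hy]
    split_ifs <;> ring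
  have hT : ∑ i, (if i ∈ T then (1 : ℝ) else 0) * y i ^ 2 = sqSum T y := by
    simp [sqSum, ite_mul]
  simp only [hterm, sum_add_distrib, ← sum_mul, hT, sum_boole, sum_const, card_univ,
    nsmul_eq_mul, filter_mem_eq_inter, univ_inter]
  rw [show ∑ i, y i ^ 2 = sqSum univ y from rfl]
  linear_combination 4 * p * (p - 1) * sqSum_univ_mul_sqSumPow (p := p - 1) (q := q) hy
    + 8 * p * q * sqSum_mul_sqSumPow (p := p - 1) (q := q) hy
    + 4 * q * (q - 1) * sqSum_mul_sqSumPow (p := p) (q := q - 1) hy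

end SqSumPow

theorem kahlerLaplacian_sqSumPow {k : ℕ} {T : Finset (Fin k)} {x : EuclideanSpace ℝ (Fin k)}
    (p q : ℝ) (hx : 0 < sqSum T x) :
    kahlerLaplacian (sqSumPow T p q) x
      = -(sqSumPow T (p - 1) (q - 1) x
          * (p * (k + 2 * p - 2 + 4 * q) * sqSum T x + q * (#T + 2 * q - 2) * sqSum univ x)) := by
  rw [kahlerLaplacian, sum_fderiv_fderiv_sqSumPow_single hx, Fintype.card_fin]
  linear_combination p * (k + 2 * p - 2 + 4 * q) * sqSum_mul_sqSumPow (p := p - 1) hx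
    + q * (#T + 2 * q - 2) * sqSum_univ_mul_sqSumPow (q := q - 1) hx

end EuclideanSpace

theorem Fin.card_filter_le_val (N a : ℕ) : #{i : Fin N | a ≤ (i : ℕ)} = N - a := by
  have := card_filter_add_card_filter_not (s := univ) fun i : Fin N => (i : ℕ) < a
  simp only [not_lt, Fin.card_filter_val_lt, card_univ, Fintype.card_fin] at this
  omega

open EuclideanSpace

theorem stmt9_general (m n : ℕ) (hmn : n ≤ m) (β γ : ℝ)
    (K : Set (EuclideanSpace ℝ (Fin (2 * m))))
    (hK : K = {x | ∀ i : Fin (2 * m), 2 * (m - n) ≤ (i : ℕ) → x i = 0})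
    (r s : EuclideanSpace ℝ (Fin (2 * m)) → ℝ)
    (hr : ∀ x, r x = ‖x‖) (hs : ∀ x, s x = Metric.infDist x K)
    (x : EuclideanSpace ℝ (Fin (2 * m))) (hx : x ∉ K) :
    kahlerLaplacian (fun y => r y ^ β * s y ^ γ) x
      = -(1/2) * r x ^ (β - 2) * s x ^ (γ - 2) *
          (γ * (γ + 2 * n - 2) * r x ^ 2 + β * (2 * m - 2 + β + 2 * γ) * s x ^ 2) := by
  set T : Finset (Fin (2 * m)) := {i | 2 * (m - n) ≤ (i : ℕ)}
  have hr_sqrt (y) : r y = √(sqSum univ y) := by rw [hr, norm_eq_sqrt_sqSum_univ]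
  have hs_sqrt (y) : s y = √(sqSum T y) := by rw [hs, hK, infDist_eq_sqrt_sqSum]
  have hpos : 0 < sqSum T x := by
    rw [hK] at hx
    simpa [sqSum_pos_iff, T] using hx
  have hcard : (#T : ℝ) = 2 * n := by
    rw [Fin.card_filter_le_val]
    push_cast [show 2 * (m - n) ≤ 2 * m by omega, Nat.cast_sub hmn]
    ring
  have hf : (fun y => r y ^ β * s y ^ γ) = sqSumPow T (β / 2) (γ / 2) := by
    ext y
    rw [sqSumPow_div_two, hr_sqrt, hs_sqrt]
  rw [hf, kahlerLaplacian_sqSumPow _ _ hpos, hcard, hr_sqrt, hs_sqrt,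
    show β / 2 - 1 = (β - 2) / 2 by ring, show γ / 2 - 1 = (γ - 2) / 2 by ring, sqSumPow_div_two,
    Real.sq_sqrt (sqSum_nonneg _ _), Real.sq_sqrt (sqSum_nonneg _ _)]
  push_cast
  ring

/-- Identify `ℂ^m` with `ℝ^{2m}`, and let `ℂ^{m-n}` (with `n > 0`) be the
coordinate subspace `K` (real codimension `2n`). With `r x = |x|` and
`s x = dist(x, K)`, for all real `β, γ`, on `ℂ^m \ K` one has
`Δ(r^β s^γ) = -½ r^{β-2} s^{γ-2} [γ(γ+2n-2) r² + β(2m-2+β+2γ) s²]`. -/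
theorem stmt9 (m n : ℕ) (hn : 0 < n) (hmn : n ≤ m) (β γ : ℝ)
    (K : Set (EuclideanSpace ℝ (Fin (2 * m))))
    (hK : K = {x | ∀ i : Fin (2 * m), 2 * (m - n) ≤ (i : ℕ) → x i = 0})
    (r s : EuclideanSpace ℝ (Fin (2 * m)) → ℝ)
    (hr : ∀ x, r x = ‖x‖) (hs : ∀ x, s x = Metric.infDist x K)
    (x : EuclideanSpace ℝ (Fin (2 * m))) (hx : x ∉ K) :
    kahlerLaplacian (fun y => r y ^ β * s y ^ γ) x
      = -(1/2) * r x ^ (β - 2) * s x ^ (γ - 2) *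
          (γ * (γ + 2 * n - 2) * r x ^ 2 + β * (2 * m - 2 + β + 2 * γ) * s x ^ 2) :=
  stmt9_general m n hmn β γ K hK r s hr hs x hx
end

section
/- Let m ≥ n ≥ 1 and 0 ≤ s ≤ r be real variables. With β, γ ∈ ℝ, there exists C > 0 such that for all 0 < s ≤ r, C·(-½) r^{β-2} s^{γ-2}[γ(γ+2n-2) r² + β(2m-2+β+2γ) s²] ≥ r^β s^{γ-2} if and only if γ(γ+2n-2) < 0 and γ(γ+2n-2) + β(2m-2+β+2γ) < 0. -/
/-! Write `A = γ(γ+2n-2)` and `B = β(2m-2+β+2γ)`. Both sides are homogeneous in `r`, so after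
dividing by `r^β s^(γ-2)` the inequality only depends on `t = s/r ∈ (0, 1]` and reads
`C (A + B t²) ≤ -2`. A constant `C > 0` exists iff `A + B t²` is bounded on `(0, 1]` by a
negative number, and the supremum of `A + B t²` over `(0, 1]` is `max A (A + B)`. -/

open Set Filter Topology

lemma exists_pos_forall_mul_le_iff {α : Type*} {S : Set α} {f : α → ℝ} {c : ℝ} (hc : c < 0) :
    (∃ C : ℝ, 0 < C ∧ ∀ x ∈ S, C * f x ≤ c) ↔ ∃ M < 0, ∀ x ∈ S, f x ≤ M := by
  constructor
  · rintro ⟨C, hC, h⟩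
    refine ⟨c / C, div_neg_of_neg_of_pos hc hC, fun x hx => ?_⟩
    rw [le_div_iff₀ hC, mul_comm]
    exact h x hx
  · rintro ⟨M, hM, h⟩
    have hcM : 0 < c / M := div_pos_of_neg_of_neg hc hM
    refine ⟨c / M, hcM, fun x hx => ?_⟩
    calc c / M * f x ≤ c / M * M := mul_le_mul_of_nonneg_left (h x hx) hcM.le
      _ = c := div_mul_cancel₀ c hM.ne

lemma exists_neg_forall_Ioc_add_mul_sq_le_iff (A B : ℝ) :
    (∃ M < 0, ∀ t ∈ Ioc (0 : ℝ) 1, A + B * t ^ 2 ≤ M) ↔ A < 0 ∧ A + B < 0 := by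
  constructor
  · rintro ⟨M, hM, h⟩
    -- for `B < 0` the bound at `t = 1` is not enough: let `t → 0⁺`
    have hlim : Tendsto (fun t : ℝ => A + B * t ^ 2) (𝓝[>] 0) (𝓝 (A + B * 0 ^ 2)) :=
      ((by fun_prop : Continuous fun t : ℝ => A + B * t ^ 2).tendsto 0).mono_left
        nhdsWithin_le_nhds
    have hA : A + B * 0 ^ 2 ≤ M :=
      le_of_tendsto hlim (eventually_of_mem (Ioc_mem_nhdsGT one_pos) h)
    have hAB : A + B * 1 ^ 2 ≤ M := h 1 ⟨one_pos, le_rfl⟩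
    constructor <;> linarith
  · rintro ⟨hA, hAB⟩
    refine ⟨max A (A + B), max_lt hA hAB, fun t ⟨ht0, ht1⟩ => ?_⟩
    have ht2 : t ^ 2 ≤ 1 := pow_le_one₀ ht0.le ht1
    rcases le_total 0 B with hB | hB
    · exact le_max_of_le_right (by nlinarith)
    · exact le_max_of_le_left (by nlinarith [sq_nonneg t])

lemma forall_div_of_pos_of_le_iff (P : ℝ → Prop) :
    (∀ r s : ℝ, 0 < s → s ≤ r → P (s / r)) ↔ ∀ t ∈ Ioc (0 : ℝ) 1, P t := by
  refine ⟨fun h t ⟨ht0, ht1⟩ => by simpa using h 1 t ht0 ht1, fun h r s hs hsr => ?_⟩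
  have hr := hs.trans_le hsr
  exact h _ ⟨div_pos hs hr, (div_le_one hr).mpr hsr⟩

lemma rpow_mul_rpow_le_mul_iff_div_sq {r s : ℝ} (hr : 0 < r) (hs : 0 < s) (A B C β γ : ℝ) :
    r ^ β * s ^ γ ≤ C * (-(1 / 2) * r ^ (β - 2) * s ^ γ * (A * r ^ 2 + B * s ^ 2)) ↔
      C * (A + B * (s / r) ^ 2) ≤ -2 := by
  have hpos : 0 < r ^ β * s ^ γ := by positivity
  have hβ : r ^ β = r ^ (β - 2) * r ^ 2 := by
    rw [← Real.rpow_natCast, ← Real.rpow_add hr]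
    norm_num
  have hscale : C * (-(1 / 2) * r ^ (β - 2) * s ^ γ * (A * r ^ 2 + B * s ^ 2)) =
      r ^ β * s ^ γ * (-(1 / 2) * (C * (A + B * (s / r) ^ 2))) := by
    rw [hβ]
    field_simp
  rw [hscale, le_mul_iff_one_le_right hpos]
  constructor <;> intro h <;> linarith

theorem stmt10_general (m n : ℕ) (β γ : ℝ) :
    (∃ C : ℝ, 0 < C ∧ ∀ r s : ℝ, 0 < s → s ≤ r →
      C * (-(1/2) * r ^ (β - 2) * s ^ (γ - 2) *
        (γ * (γ + 2 * n - 2) * r ^ 2 + β * (2 * m - 2 + β + 2 * γ) * s ^ 2))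
      ≥ r ^ β * s ^ (γ - 2)) ↔
    (γ * (γ + 2 * n - 2) < 0 ∧
      γ * (γ + 2 * n - 2) + β * (2 * m - 2 + β + 2 * γ) < 0) := by
  set A := γ * (γ + 2 * n - 2)
  set B := β * (2 * m - 2 + β + 2 * γ)
  rw [← exists_neg_forall_Ioc_add_mul_sq_le_iff,
    ← exists_pos_forall_mul_le_iff (f := fun t => A + B * t ^ 2) (by norm_num : (-2 : ℝ) < 0)]
  refine exists_congr fun C => and_congr_right fun _ => ?_
  rw [← forall_div_of_pos_of_le_iff (fun t => C * (A + B * t ^ 2) ≤ -2)]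
  refine forall₂_congr fun r s => forall₂_congr fun hs hsr => ?_
  exact rpow_mul_rpow_le_mul_iff_div_sq (hs.trans_le hsr) hs A B C β (γ - 2)

/-- For real variables `0 < s ≤ r`, integers `m ≥ n ≥ 1`, and
`β, γ ∈ ℝ`, there exists a constant `C > 0` with
`C · (-½) r^{β-2} s^{γ-2}[γ(γ+2n-2) r² + β(2m-2+β+2γ) s²] ≥ r^β s^{γ-2}`
for all `0 < s ≤ r` if and only if `γ(γ+2n-2) < 0` and
`γ(γ+2n-2) + β(2m-2+β+2γ) < 0`. -/
theorem stmt10 (m n : ℕ) (hn : 1 ≤ n) (hmn : n ≤ m) (β γ : ℝ) :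
    (∃ C : ℝ, 0 < C ∧ ∀ r s : ℝ, 0 < s → s ≤ r →
      C * (-(1/2) * r ^ (β - 2) * s ^ (γ - 2) *
        (γ * (γ + 2 * n - 2) * r ^ 2 + β * (2 * m - 2 + β + 2 * γ) * s ^ 2))
      ≥ r ^ β * s ^ (γ - 2)) ↔
    (γ * (γ + 2 * n - 2) < 0 ∧
      γ * (γ + 2 * n - 2) + β * (2 * m - 2 + β + 2 * γ) < 0) :=
  stmt10_general m n β γ
end
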